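/- arXiv:2512.20325 — 5 statements merged into one kernel-verified Lean document; each statement's English description precedes it below -/
import Mathlib

section
/- Fix an integer i ≥ 2 and natural number c with c ≥ i − 1, let b, D : ℝ, and let d : ℕ → ℝ be antitone. Then the multiset of values max(0, min(D, min_{j∈S} d j) − b), as S ranges over all (i−1)-element subsets of {1, …, c} (counted with multiplicity), equals the multiset in which, for each j with i − 1 ≤ j ≤ c, the value ℓ(j) := max(0, min(D, d j) − b) occurs with multiplicity C(j−1, i−2). Formally, the multiset obtained by mapping S ↦ max(0, min(D, S.inf' d) − b) over ((Finset.Icc 1 c).powersetCard (i−1)).val equals the multiset ⋃_{j ∈ Icc (i−1) c} (Multiset.replicate ((j−1).choose (i−2)) (max(0, min(D, d j) − b))). -/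
/-!
Grouping the `(i-1)`-subsets `S` of `{1, …, c}` by their largest element `j`: since `d` is
antitone, `min_{k ∈ S} d k = d j`, and the subsets with largest element `j` are `insert j T` for
the `C(j-1, i-2)` subsets `T` of `{1, …, j-1}` of size `i-2`. The count is organised as an
induction on `c`, adding the new top element `c + 1`.
-/

open Finset

lemma Finset.inf'_eq_apply_max'_of_antitone {α β : Type*} [LinearOrder α] [SemilatticeInf β]
    {f : α → β} (hf : Antitone f) (s : Finset α) (hs : s.Nonempty) :
    s.inf' hs f = f (s.max' hs) :=
  le_antisymm (inf'_le f (max'_mem s hs)) (le_inf' hs f fun _ ha => hf (le_max' s _ ha))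

lemma Finset.powersetCard_succ_insert_val {α : Type*} [DecidableEq α] {x : α} {s : Finset α}
    (hx : x ∉ s) (n : ℕ) :
    ((insert x s).powersetCard (n + 1)).val =
      (s.powersetCard (n + 1)).val + (s.powersetCard n).val.map (insert x) := by
  have hdisj : Disjoint (s.powersetCard (n + 1)) ((s.powersetCard n).image (insert x)) := by
    rw [disjoint_left]
    rintro _ hT hT'
    obtain ⟨U, -, rfl⟩ := mem_image.mp hT'
    exact hx ((mem_powersetCard.mp hT).1 (mem_insert_self x U))
  have hinj : Set.InjOn (insert x) (s.powersetCard n : Set (Finset α)) := by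
    intro T hT U hU hTU
    have notMem : ∀ V ∈ s.powersetCard n, x ∉ V := fun V hV h =>
      hx ((mem_powersetCard.mp hV).1 h)
    rw [← erase_insert (notMem T hT), ← erase_insert (notMem U hU), hTU]
  rw [powersetCard_succ_insert hx, ← disjUnion_eq_union _ _ hdisj, disjUnion_val,
    image_val_of_injOn hinj]

lemma Finset.Icc_bind_replicate_succ_top {α : Type*} (F : ℕ → α) (m c : ℕ) :
    (Icc (m + 1) (c + 1)).val.bind (fun j => Multiset.replicate ((j - 1).choose m) (F j)) =
      (Icc (m + 1) c).val.bind (fun j => Multiset.replicate ((j - 1).choose m) (F j)) +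
        Multiset.replicate (c.choose m) (F (c + 1)) := by
  simp only [Multiset.bind, Multiset.join, ← sum_eq_multiset_sum]
  rcases le_or_gt m c with hmc | hcm
  · rw [sum_Icc_succ_top (by omega), Nat.add_sub_cancel]
  · rw [Icc_eq_empty (by omega), Icc_eq_empty (by omega), Nat.choose_eq_zero_of_lt hcm]
    simp

lemma Finset.powersetCard_Icc_map_sup_eq_bind_replicate {α : Type*} (F : ℕ → α) (m c : ℕ) :
    ((Icc 1 c).powersetCard (m + 1)).val.map (fun S => F (S.sup id)) =
      (Icc (m + 1) c).val.bind (fun j => Multiset.replicate ((j - 1).choose m) (F j)) := by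
  induction c with
  | zero => simp
  | succ c ih =>
    have top_notMem : c + 1 ∉ Icc 1 c := by simp
    have new_sets : ((Icc 1 c).powersetCard m).val.map (fun T => F ((insert (c + 1) T).sup id)) =
        Multiset.replicate (c.choose m) (F (c + 1)) := by
      rw [Multiset.eq_replicate, Multiset.card_map, card_val, card_powersetCard, Nat.card_Icc,
        Nat.add_sub_cancel]
      refine ⟨rfl, fun y hy => ?_⟩
      obtain ⟨T, hT, rfl⟩ := Multiset.mem_map.mp hy
      have hTc : T.sup id ≤ c := Finset.sup_le fun k hk =>
        (mem_Icc.mp ((mem_powersetCard.mp (mem_val.mp hT)).1 hk)).2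
      rw [sup_insert, id, sup_eq_left.mpr (by omega)]
    rw [← Finset.insert_Icc_right_eq_Icc_add_one (by omega),
      powersetCard_succ_insert_val top_notMem, Multiset.map_add, Multiset.map_map, ih,
      Icc_bind_replicate_succ_top]
    exact congrArg _ new_sets

/-- Anchored rank-grouped multiset identity: the multiset of truncated lengths
`max 0 (min D (min_{j∈S} d j) - b)` over all `(i-1)`-element subsets `S` of
`{1, …, c}` equals the multiset where, for each rank `j` with `i-1 ≤ j ≤ c`,
the value `max 0 (min D (d j) - b)` occurs with multiplicity `C(j-1, i-2)`. -/
theorem stmt_6 (i c : ℕ) (hi : 2 ≤ i) (b D : ℝ)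
    (d : ℕ → ℝ) (hd : Antitone d) :
    (((Finset.Icc 1 c).powersetCard (i - 1)).attach.val.map
      (fun (S : {x // x ∈ (Finset.Icc 1 c).powersetCard (i - 1)}) =>
        have hS : S.1.Nonempty := Finset.card_pos.mp (by
          have h := (Finset.mem_powersetCard.mp S.2).2
          omega)
        max 0 (min D (S.1.inf' hS d) - b))) =
    ((Finset.Icc (i - 1) c).val.bind
      (fun j => Multiset.replicate ((j - 1).choose (i - 2))
        (max 0 (min D (d j) - b)))) := by
  obtain ⟨m, rfl⟩ : ∃ m, i = m + 2 := ⟨i - 2, by omega⟩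
  have inf'_eq_sup (S : Finset ℕ) (hS : S.Nonempty) : S.inf' hS d = d (S.sup id) := by
    rw [inf'_eq_apply_max'_of_antitone hd, max'_eq_sup', sup'_eq_sup]
  simp only [inf'_eq_sup]
  exact (Multiset.attach_map_val' _ _).trans
    (powersetCard_Icc_map_sup_eq_bind_replicate (fun j => max 0 (min D (d j) - b)) m c)
end

section
/- Fix an integer i ≥ 2, a natural number M, and bars b, d : Fin M → ℝ with b r < d r for all r. Define the sweep order on Fin M by s ≺ r iff b s < b r, or b s = b r and s < r, the alive set A_r := {s : s ≺ r and b r < d s}, and c_r := |A_r|. For each r, let the deaths of the bars in A_r, listed in non-increasing order, be d_r(1) ≥ d_r(2) ≥ ⋯ ≥ d_r(c_r), and set ℓ_r(j) := min(d r, d_r(j)) − b r (which is positive). Then the multiset of lengths min_{ℓ∈I} d ℓ − max_{ℓ∈I} b ℓ, as I ranges over all i-element subsets of Fin M with max_{ℓ∈I} b ℓ < min_{ℓ∈I} d ℓ (counted with multiplicity), equals the multiset union over all r ∈ Fin M of the multisets {ℓ_r(j) with multiplicity C(j−1, i−2) : i − 1 ≤ j ≤ c_r}. -/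
open scoped Classical

/-- The alive set `A_r`: bars preceding `r` in the sweep order (earlier birth,
or equal birth and smaller index) that are still alive at the birth of `r`. -/
noncomputable def aliveSet {M : ℕ} (b d : Fin M → ℝ) (r : Fin M) : Finset (Fin M) :=
  Finset.univ.filter (fun s => (b s < b r ∨ (b s = b r ∧ s < r)) ∧ b r < d s)

/-- The `j`-th largest death time among the bars alive just before the birth of
`r` (so `nthDeath b d r 1 ≥ nthDeath b d r 2 ≥ ⋯`). -/
noncomputable def nthDeath {M : ℕ} (b d : Fin M → ℝ) (r : Fin M) (j : ℕ) : ℝ :=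
  (((aliveSet b d r).val.map d).sort (· ≥ ·)).getD (j - 1) 0

/-!
An admissible set `I` of bars has a unique sweep-maximal element `r`, its anchor; then
`I \ {r}` lies in the alive set `A_r`, and conversely `{r} ∪ J` is admissible for every
`J ⊆ A_r`, with maximal birth `b r` and length `min (d r) (min_J d) - b r`. So the lengths
split over anchors, and within one anchor the length of `{r} ∪ J` only depends on the element
of `J` of smallest death. Adding the bars of `A_r` one at a time in order of decreasing death,
the `j`-th one is the smallest-death element of exactly `C(j-1, i-2)` sets `J` of size `i-1`:
those that choose the other `i-2` elements among the `j-1` bars added before it.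
-/

open Finset

theorem Finset.val_map_eq_sum_singleton {α β : Type*} (t : Finset α) (f : α → β) :
    t.val.map f = ∑ x ∈ t, ({f x} : Multiset β) := by
  rw [Finset.sum_eq_multiset_sum, ← Multiset.sum_map_singleton (t.val.map f), Multiset.map_map]
  rfl

theorem Multiset.sort_ge_cons_of_forall_le {β : Type*} [LinearOrder β] {S : Multiset β} {x : β}
    (h : ∀ y ∈ S, x ≤ y) : (x ::ₘ S).sort (· ≥ ·) = S.sort (· ≥ ·) ++ [x] := by
  refine List.Perm.eq_of_pairwise' (Multiset.pairwise_sort _ _) ?_ ?_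
  · simpa [List.pairwise_append] using fun y hy => h y hy
  · rw [← Multiset.coe_eq_coe, Multiset.sort_eq, ← Multiset.coe_add, Multiset.sort_eq,
      Multiset.coe_singleton, ← Multiset.singleton_add, add_comm]

theorem Finset.sum_range_replicate_choose_eq_sum_Icc {γ : Type*} (k c : ℕ) (g : ℕ → γ) :
    ∑ m ∈ range c, Multiset.replicate (m.choose k) (g m) =
      ∑ j ∈ Icc (k + 1) c, Multiset.replicate ((j - 1).choose k) (g (j - 1)) := by
  have hIcc : Icc (k + 1) c = (Ico k c).map (addRightEmbedding 1) := by
    rw [map_add_right_Ico]; rfl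
  rw [hIcc, sum_map]
  refine (sum_subset (fun m hm => mem_range.2 (mem_Ico.1 hm).2) fun m _ hm => ?_).symm
  rw [Nat.choose_eq_zero_of_lt (by simp_all), Multiset.replicate_zero]

variable {α β γ : Type*} [DecidableEq α] [LinearOrder β]

theorem Finset.injOn_insert_powersetCard {a : α} {s : Finset α} (ha : a ∉ s) (k : ℕ) :
    Set.InjOn (insert a) (s.powersetCard k : Set (Finset α)) := by
  intro J hJ J' hJ' he
  have hJ := (mem_powersetCard.1 hJ).1
  have hJ' := (mem_powersetCard.1 hJ').1
  rw [← erase_insert (fun h => ha (hJ h)), ← erase_insert (fun h => ha (hJ' h)), he]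

theorem Finset.sum_powersetCard_succ_eq_sum_range (f : α → β) (F : Finset α → γ) (G : β → γ)
    (x₀ : β) (k : ℕ) (s : Finset α)
    (hF : ∀ J ⊆ s, ∀ a ∈ J, (∀ x ∈ J, f a ≤ f x) → F J = G (f a)) :
    ∑ J ∈ s.powersetCard (k + 1), ({F J} : Multiset γ) =
      ∑ m ∈ range #s, Multiset.replicate (m.choose k)
        (G (((s.val.map f).sort (· ≥ ·)).getD m x₀)) := by
  induction s using Finset.induction_on_min_value f with
  | empty => simp
  | insert a s ha hmin ih =>
    have hlen : ((s.val.map f).sort (· ≥ ·)).length = #s := by simp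
    have hsort :
        ((insert a s).val.map f).sort (· ≥ ·) = (s.val.map f).sort (· ≥ ·) ++ [f a] := by
      rw [insert_val_of_notMem ha, Multiset.map_cons]
      exact Multiset.sort_ge_cons_of_forall_le (by simpa using hmin)
    have hdisj : Disjoint (s.powersetCard (k + 1)) ((s.powersetCard k).image (insert a)) := by
      simp only [disjoint_left, mem_powersetCard, mem_image, not_exists, not_and]
      rintro J ⟨hJs, -⟩ J' - rfl
      exact ha (hJs (mem_insert_self a J'))
    have hnew : ∀ J ∈ s.powersetCard k, ({F (insert a J)} : Multiset γ) = {G (f a)} := by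
      intro J hJ
      have hJ := (mem_powersetCard.1 hJ).1
      rw [hF _ (insert_subset_insert a hJ) a (mem_insert_self a J)]
      simp only [mem_insert, forall_eq_or_imp, le_refl, true_and]
      exact fun x hx => hmin x (hJ hx)
    rw [powersetCard_succ_insert ha, sum_union hdisj, sum_image (injOn_insert_powersetCard ha k),
      sum_congr rfl hnew, sum_const, card_powersetCard, Multiset.nsmul_singleton,
      ih fun J hJ => hF J (hJ.trans (subset_insert a s)),
      card_insert_of_notMem ha, sum_range_succ, hsort,
      List.getD_append_right _ _ _ _ hlen.le, hlen, Nat.sub_self]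
    congr 1
    refine sum_congr rfl fun m hm => ?_
    rw [List.getD_append _ _ _ _ (hlen ▸ mem_range.1 hm)]

/-- The length of the bar `[max_I b, min_I d)` of `Λ^I`, with junk value `0` at `I = ∅`. -/
noncomputable def exteriorBarLength {ι : Type*} (b d : ι → ℝ) (I : Finset ι) : ℝ :=
  if h : I.Nonempty then I.inf' h d - I.sup' h b else 0

namespace AnchoredDecomposition

variable {M : ℕ} (b d : Fin M → ℝ)

/-- `s ≺ r` iff `sweepKey b s < sweepKey b r`. -/
def sweepKey (s : Fin M) : Lex (ℝ × Fin M) := toLex (b s, s)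

theorem sweepKey_injective : Function.Injective (sweepKey b) := fun s t h => by
  simpa [sweepKey] using congrArg (fun x => (ofLex x).2) h

theorem mem_aliveSet_iff {r s : Fin M} :
    s ∈ aliveSet b d r ↔ sweepKey b s < sweepKey b r ∧ b r < d s := by
  simp [aliveSet, sweepKey, Prod.Lex.lt_iff]

variable {b d}

theorem le_of_mem_aliveSet {r s : Fin M} (h : s ∈ aliveSet b d r) : b s ≤ b r := by
  simp only [aliveSet, mem_filter, mem_univ, true_and] at h
  rcases h.1 with h | h
  exacts [h.le, h.1.le]

theorem notMem_aliveSet_self (r : Fin M) : r ∉ aliveSet b d r := fun h =>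
  lt_irrefl _ ((mem_aliveSet_iff b d).1 h).1

theorem sup'_insert_of_subset_aliveSet {r : Fin M} {J : Finset (Fin M)}
    (hJ : J ⊆ aliveSet b d r) : (insert r J).sup' (insert_nonempty r J) b = b r :=
  le_antisymm (sup'_le _ _ fun s hs => by
    rcases mem_insert.1 hs with rfl | hs
    exacts [le_rfl, le_of_mem_aliveSet (hJ hs)]) (le_sup' b (mem_insert_self r J))

theorem sweepKey_lt_of_mem_insert {r s : Fin M} {J : Finset (Fin M)} (hJ : J ⊆ aliveSet b d r)
    (hs : s ∈ insert r J) (hsr : s ≠ r) : sweepKey b s < sweepKey b r :=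
  ((mem_aliveSet_iff b d).1 (hJ ((mem_insert.1 hs).resolve_left hsr))).1

variable (b d) in
noncomputable def anchorBlock (k : ℕ) (r : Fin M) : Finset (Finset (Fin M)) :=
  ((aliveSet b d r).powersetCard k).image (insert r)

theorem pairwiseDisjoint_anchorBlock (k : ℕ) :
    (↑(univ : Finset (Fin M)) : Set (Fin M)).PairwiseDisjoint (anchorBlock b d k) := by
  intro r _ r' _ hrr'
  simp only [Function.onFun, disjoint_left, anchorBlock, mem_image, mem_powersetCard]
  rintro _ ⟨J, ⟨hJ, -⟩, rfl⟩ ⟨J', ⟨hJ', -⟩, he⟩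
  have hr : r ∈ insert r' J' := he ▸ mem_insert_self r J
  have hr' : r' ∈ insert r J := he ▸ mem_insert_self r' J'
  exact lt_asymm (sweepKey_lt_of_mem_insert hJ' hr hrr')
    (sweepKey_lt_of_mem_insert hJ hr' hrr'.symm)

theorem filter_admissible_eq_disjiUnion (hbd : ∀ r, b r < d r) (k : ℕ) :
    (univ.powersetCard (k + 1)).filter (fun I => ∀ hI : I.Nonempty, I.sup' hI b < I.inf' hI d) =
      univ.disjiUnion (anchorBlock b d k) (pairwiseDisjoint_anchorBlock k) := by
  ext I
  simp only [mem_filter, mem_powersetCard, subset_univ, true_and, mem_disjiUnion, mem_univ,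
    anchorBlock, mem_image]
  constructor
  · rintro ⟨hcard, hadm⟩
    have hI : I.Nonempty := card_pos.1 (by omega)
    obtain ⟨r, hr, hmax⟩ := exists_max_image I (sweepKey b) hI
    refine ⟨r, I.erase r, ⟨fun s hs => (mem_aliveSet_iff b d).2 ⟨?_, ?_⟩, ?_⟩, insert_erase hr⟩
    · exact (hmax s (mem_of_mem_erase hs)).lt_of_ne
        fun h => ne_of_mem_erase hs (sweepKey_injective b h)
    · calc b r ≤ I.sup' hI b := le_sup' b hr
        _ < I.inf' hI d := hadm hI
        _ ≤ d s := inf'_le d (mem_of_mem_erase hs)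
    · rw [card_erase_of_mem hr, hcard, Nat.add_sub_cancel]
  · rintro ⟨r, J, ⟨hJ, hcard⟩, rfl⟩
    refine ⟨by rw [card_insert_of_notMem fun h => notMem_aliveSet_self r (hJ h), hcard],
      fun hI => ?_⟩
    rw [sup'_insert_of_subset_aliveSet hJ, lt_inf'_iff]
    intro t ht
    rcases mem_insert.1 ht with rfl | ht
    exacts [hbd t, ((mem_aliveSet_iff b d).1 (hJ ht)).2]

theorem exteriorBarLength_insert {r a : Fin M} {J : Finset (Fin M)} (hJ : J ⊆ aliveSet b d r)
    (ha : a ∈ J) (hmin : ∀ x ∈ J, d a ≤ d x) :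
    exteriorBarLength b d (insert r J) = min (d r) (d a) - b r := by
  have hJne : J.Nonempty := ⟨a, ha⟩
  rw [exteriorBarLength, dif_pos (insert_nonempty r J), sup'_insert_of_subset_aliveSet hJ,
    inf'_insert hJne, le_antisymm (inf'_le d ha) (le_inf' hJne d hmin)]

theorem sum_anchorBlock (k : ℕ) (r : Fin M) :
    ∑ I ∈ anchorBlock b d (k + 1) r, ({exteriorBarLength b d I} : Multiset ℝ) =
      ∑ j ∈ Icc (k + 1) #(aliveSet b d r),
        Multiset.replicate ((j - 1).choose k) (min (d r) (nthDeath b d r j) - b r) := by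
  rw [anchorBlock, sum_image (injOn_insert_powersetCard (notMem_aliveSet_self r) _),
    sum_powersetCard_succ_eq_sum_range d _ (fun y => min (d r) y - b r) 0 k _
      fun J hJ a ha hmin => exteriorBarLength_insert hJ ha hmin,
    sum_range_replicate_choose_eq_sum_Icc]
  rfl

end AnchoredDecomposition

/-- Anchored rank-grouping decomposition: the multiset of lengths
`min death − max birth` over all `i`-element subsets of bars with
`max birth < min death` equals the union over anchors `r` of the multisets in
which `ℓ_r(j) = min (d r) (d_r(j)) − b r` occurs with multiplicity
`C(j-1, i-2)` for `i-1 ≤ j ≤ c_r`. -/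
theorem stmt_7 (i M : ℕ) (hi : 2 ≤ i) (b d : Fin M → ℝ) (hbd : ∀ r, b r < d r) :
    ((((Finset.univ : Finset (Fin M)).powersetCard i).filter
        (fun I => ∀ hI : I.Nonempty, I.sup' hI b < I.inf' hI d)).attach.val.map
      (fun (I : {x // x ∈ ((Finset.univ : Finset (Fin M)).powersetCard i).filter
          (fun I => ∀ hI : I.Nonempty, I.sup' hI b < I.inf' hI d)}) =>
        have hI : I.1.Nonempty := Finset.card_pos.mp (by
          have h := (Finset.mem_powersetCard.mp (Finset.mem_filter.mp I.2).1).2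
          omega)
        I.1.inf' hI d - I.1.sup' hI b)) =
    ∑ r : Fin M, ∑ j ∈ Finset.Icc (i - 1) ((aliveSet b d r).card),
      Multiset.replicate ((j - 1).choose (i - 2))
        (min (d r) (nthDeath b d r j) - b r) := by
  obtain ⟨k, rfl⟩ : ∃ k, i = k + 2 := ⟨i - 2, by omega⟩
  rw [Finset.attach_val]
  refine (Multiset.map_congr (g := exteriorBarLength b d ∘ Subtype.val) rfl
    fun I _ => (dif_pos _).symm).trans ?_
  rw [← Multiset.map_map, Multiset.attach_map_val, Finset.val_map_eq_sum_singleton,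
    AnchoredDecomposition.filter_admissible_eq_disjiUnion hbd, Finset.sum_disjiUnion]
  exact Finset.sum_congr rfl fun r _ => AnchoredDecomposition.sum_anchorBlock k r
end

section
/- Fix an integer i ≥ 1, a natural number M, and bars b, d : Fin M → ℝ with b r < d r for all r. Define the sweep order on Fin M by s ≺ r iff b s < b r, or b s = b r and s < r, the alive set A_r := {s : s ≺ r and b r < d s}, and c_r := |A_r|. Then the number of i-element subsets I of Fin M with max_{ℓ∈I} b ℓ < min_{ℓ∈I} d ℓ equals ∑_{r ∈ Fin M} C(c_r, i−1). -/
/-!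
A set `I` of bars has `max b < min d` iff every birth in `I` precedes every death in `I`.
Let `r` be the maximum of such an `I` in the sweep order. Every other `s ∈ I` precedes `r`
and is still alive at `b r`, so `I.erase r ⊆ A_r`; conversely, for any `J ⊆ A_r` the birth
`b r` is the largest one in `insert r J` and comes before all its deaths. Thus
`(r, J) ↦ insert r J` is a bijection from pairs with `J` an `(i-1)`-subset of `A_r` onto the
`i`-subsets counted on the left.
-/

open scoped Classical

open Finset

theorem Finset.forall_sup'_lt_inf'_iff {ι α : Type*} [LinearOrder α] (I : Finset ι)
    (f g : ι → α) :
    (∀ hI : I.Nonempty, I.sup' hI f < I.inf' hI g) ↔ ∀ s ∈ I, ∀ t ∈ I, f s < g t := by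
  constructor
  · intro h s hs t ht
    calc f s ≤ I.sup' ⟨s, hs⟩ f := le_sup' f hs
      _ < I.inf' ⟨s, hs⟩ g := h ⟨s, hs⟩
      _ ≤ g t := inf'_le g ht
  · intro h hI
    rw [sup'_lt_iff]
    exact fun s hs => (lt_inf'_iff _).mpr (h s hs)

section Sweep

variable {M : ℕ} (b d : Fin M → ℝ)

/-- The sweep order is the lexicographic order on `(b s, s)`. -/
def sweepKey (s : Fin M) : Lex (ℝ × Fin M) := toLex (b s, s)

theorem sweepKey_injective : Function.Injective (sweepKey b) := fun s t h => by
  simpa [sweepKey] using congrArg (fun x => (ofLex x).2) h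

variable {b d}

theorem sweepKey_lt_iff {s r : Fin M} :
    sweepKey b s < sweepKey b r ↔ b s < b r ∨ b s = b r ∧ s < r := by
  simp [sweepKey, Prod.Lex.lt_iff]

theorem le_of_sweepKey_le {s r : Fin M} (h : sweepKey b s ≤ sweepKey b r) : b s ≤ b r := by
  simp only [sweepKey, Prod.Lex.toLex_le_toLex] at h
  rcases h with h | h
  exacts [h.le, h.1.le]

theorem mem_aliveSet_iff {r s : Fin M} :
    s ∈ aliveSet b d r ↔ sweepKey b s < sweepKey b r ∧ b r < d s := by
  simp [aliveSet, sweepKey_lt_iff]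

theorem notMem_aliveSet_self (r : Fin M) : r ∉ aliveSet b d r := fun h =>
  (mem_aliveSet_iff.mp h).1.false

theorem sweepKey_le_of_mem_insert {r s : Fin M} {J : Finset (Fin M)}
    (hJ : J ⊆ aliveSet b d r) (hs : s ∈ insert r J) : sweepKey b s ≤ sweepKey b r := by
  rcases mem_insert.mp hs with rfl | hs
  exacts [le_rfl, (mem_aliveSet_iff.mp (hJ hs)).1.le]

theorem birth_lt_death_of_mem_insert (hbd : ∀ r, b r < d r) {r : Fin M} {J : Finset (Fin M)}
    (hJ : J ⊆ aliveSet b d r) : ∀ s ∈ insert r J, ∀ t ∈ insert r J, b s < d t := by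
  intro s hs t ht
  refine (le_of_sweepKey_le (sweepKey_le_of_mem_insert hJ hs)).trans_lt ?_
  rcases mem_insert.mp ht with rfl | ht
  exacts [hbd t, (mem_aliveSet_iff.mp (hJ ht)).2]

theorem eq_and_eq_of_insert_eq_insert {r r' : Fin M} {J J' : Finset (Fin M)}
    (hJ : J ⊆ aliveSet b d r) (hJ' : J' ⊆ aliveSet b d r') (h : insert r J = insert r' J') :
    r = r' ∧ J = J' := by
  have hrr' : sweepKey b r ≤ sweepKey b r' :=
    sweepKey_le_of_mem_insert hJ' (h ▸ mem_insert_self r J)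
  have hr'r : sweepKey b r' ≤ sweepKey b r :=
    sweepKey_le_of_mem_insert hJ (h ▸ mem_insert_self r' J')
  obtain rfl := sweepKey_injective b (hrr'.antisymm hr'r)
  refine ⟨rfl, ?_⟩
  rw [← erase_insert (notMem_aliveSet_self r <| hJ ·), h,
    erase_insert (notMem_aliveSet_self r <| hJ' ·)]

theorem erase_subset_aliveSet {I : Finset (Fin M)} {r : Fin M} (hr : r ∈ I)
    (hmax : ∀ s ∈ I, sweepKey b s ≤ sweepKey b r) (hI : ∀ s ∈ I, ∀ t ∈ I, b s < d t) :
    I.erase r ⊆ aliveSet b d r := by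
  intro s hs
  obtain ⟨hsr, hsI⟩ := mem_erase.mp hs
  exact mem_aliveSet_iff.mpr
    ⟨(hmax s hsI).lt_of_ne ((sweepKey_injective b).ne hsr), hI r hr s hsI⟩

end Sweep

/-- The number of `i`-element subsets of bars with `max birth < min death`
equals the sum over anchors `r` of `C(c_r, i-1)` where `c_r = |A_r|`. -/
theorem stmt_8 (i M : ℕ) (hi : 1 ≤ i) (b d : Fin M → ℝ) (hbd : ∀ r, b r < d r) :
    ((((Finset.univ : Finset (Fin M)).powersetCard i).filter
        (fun I => ∀ hI : I.Nonempty, I.sup' hI b < I.inf' hI d)).card) =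
      ∑ r : Fin M, ((aliveSet b d r).card).choose (i - 1) := by
  simp_rw [← card_powersetCard, ← card_sigma, forall_sup'_lt_inf'_iff]
  symm
  refine card_bij (fun p _ => insert p.1 p.2) ?_ ?_ ?_
  · rintro ⟨r, J⟩ hp
    obtain ⟨-, hJ, hJcard⟩ := mem_sigma.mp hp |>.imp_right mem_powersetCard.mp
    refine mem_filter.mpr ⟨mem_powersetCard.mpr ⟨subset_univ _, ?_⟩,
      birth_lt_death_of_mem_insert hbd hJ⟩
    rw [card_insert_of_notMem (notMem_aliveSet_self r <| hJ ·), hJcard]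
    omega
  · rintro ⟨r, J⟩ hp ⟨r', J'⟩ hp' h
    obtain ⟨-, hJ, -⟩ := mem_sigma.mp hp |>.imp_right mem_powersetCard.mp
    obtain ⟨-, hJ', -⟩ := mem_sigma.mp hp' |>.imp_right mem_powersetCard.mp
    obtain ⟨rfl, rfl⟩ := eq_and_eq_of_insert_eq_insert hJ hJ' h
    rfl
  · intro I hI
    obtain ⟨hIcard, hIgood⟩ := mem_filter.mp hI |>.imp_left (mem_powersetCard.mp · |>.2)
    obtain ⟨r, hr, hmax⟩ := exists_max_image I (sweepKey b) (card_pos.mp (by omega))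
    refine ⟨⟨r, I.erase r⟩, ?_, insert_erase hr⟩
    simpa [mem_powersetCard, card_erase_of_mem hr, hIcard] using
      erase_subset_aliveSet hr hmax hIgood
end

section
/- Let n be a natural number, c ≥ 0 a real number, and s, t : Fin n → ℝ two antitone (non-increasing) functions. Suppose there exists a permutation σ of Fin n such that |s k − t (σ k)| ≤ c for every k. Then |s k − t k| ≤ c for every k. -/
/-- Pigeonhole: an injective map cannot send `Iic k` into the smaller set `Iio k`. -/
lemma exists_le_le_apply_of_injective {α : Type*} [LinearOrder α] [LocallyFiniteOrderBot α]
    {f : α → α} (hf : Function.Injective f) (k : α) : ∃ j ≤ k, k ≤ f j := by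
  by_contra! hlt
  have hsub : (Finset.Iic k).image f ⊆ Finset.Iio k := by
    simpa [Finset.image_subset_iff] using hlt
  have hcard := Finset.card_le_card hsub
  rw [Finset.card_image_of_injective _ hf, ← Finset.Iio_insert,
    Finset.card_insert_of_notMem Finset.notMem_Iio_self] at hcard
  omega

lemma sub_le_of_antitone_of_forall_sub_comp_le {α : Type*} [LinearOrder α]
    [LocallyFiniteOrderBot α] {s t : α → ℝ} (hs : Antitone s) (ht : Antitone t) {f : α → α}
    (hf : Function.Injective f) {c : ℝ} (h : ∀ k, s k - t (f k) ≤ c) (k : α) :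
    s k - t k ≤ c := by
  obtain ⟨j, hjk, hkj⟩ := exists_le_le_apply_of_injective hf k
  calc s k - t k ≤ s j - t (f j) := sub_le_sub (hs hjk) (ht hkj)
    _ ≤ c := h j

theorem stmt_9_general (n : ℕ) (c : ℝ) (s t : Fin n → ℝ)
    (hs : Antitone s) (ht : Antitone t) (σ : Equiv.Perm (Fin n))
    (h : ∀ k, |s k - t (σ k)| ≤ c) :
    ∀ k, |s k - t k| ≤ c := by
  have hst : ∀ k, s k - t k ≤ c :=
    sub_le_of_antitone_of_forall_sub_comp_le hs ht σ.injective
      fun k => (abs_sub_le_iff.mp (h k)).1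
  have hts : ∀ k, t k - s k ≤ c := by
    refine sub_le_of_antitone_of_forall_sub_comp_le ht hs σ.symm.injective fun k => ?_
    simpa using (abs_sub_le_iff.mp (h (σ.symm k))).2
  exact fun k => abs_sub_le_iff.mpr ⟨hst k, hts k⟩

/-- Sorted-rearrangement Lipschitz lemma: if two non-increasing sequences admit
a permutation matching elements within distance `c`, then they agree within `c`
coordinatewise. -/
theorem stmt_9 (n : ℕ) (c : ℝ) (hc : 0 ≤ c) (s t : Fin n → ℝ)
    (hs : Antitone s) (ht : Antitone t) (σ : Equiv.Perm (Fin n))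
    (h : ∀ k, |s k - t (σ k)| ≤ c) :
    ∀ k, |s k - t k| ≤ c :=
  stmt_9_general n c s t hs ht σ h
end

section
/- Let n be a natural number, ε ≥ 0 a real number, and X, Y : Fin n → ℝ × ℝ two families of bars. Suppose there is a permutation σ of Fin n such that for every k, |(X k).1 − (Y (σ k)).1| ≤ ε and |(X k).2 − (Y (σ k)).2| ≤ ε. Define lengths LX k := max(0, (X k).2 − (X k).1) and LY k := max(0, (Y k).2 − (Y k).1). If s, t : Fin n → ℝ are antitone functions that are rearrangements of LX and LY respectively (i.e., there exist permutations τ and τ' of Fin n with s = LX ∘ τ and t = LY ∘ τ'), then |s k − t k| ≤ 2ε for every k. -/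
/-- If `t k < s k`, the matching `τ'⁻¹ ∘ σ ∘ τ` would inject the `k + 1` indices `≤ k` of `s`
into the `k` indices `< k` of `t`. -/
theorem le_of_antitone_rearrangements {α : Type*} [LinearOrder α] {n : ℕ}
    {u v s t : Fin n → α} (hs : Antitone s) (ht : Antitone t) (σ τ τ' : Equiv.Perm (Fin n))
    (hsτ : s = u ∘ τ) (htτ : t = v ∘ τ') (huv : ∀ j, u j ≤ v (σ j)) (k : Fin n) :
    s k ≤ t k := by
  by_contra! hlt
  set f : Fin n → Fin n := fun i => τ'.symm (σ (τ i))
  have hmaps : ∀ i ∈ Finset.Iic k, f i ∈ Finset.Iio k := by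
    intro i hi
    have hti : s i ≤ t (f i) := by
      simpa [hsτ, htτ, f] using huv (τ i)
    have hkf : t k < t (f i) := hlt.trans_le ((hs (Finset.mem_Iic.mp hi)).trans hti)
    exact Finset.mem_Iio.mpr (lt_of_not_ge fun h => (ht h).not_gt hkf)
  have hinj : Set.InjOn f (Finset.Iic k) := fun a _ b _ hab =>
    τ.injective (σ.injective (τ'.symm.injective hab))
  have hcard := Finset.card_le_card_of_injOn f hmaps hinj
  simp only [Fin.card_Iic, Fin.card_Iio] at hcard
  omega

theorem abs_sub_le_of_antitone_rearrangements {α : Type*} [AddCommGroup α] [LinearOrder α]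
    [IsOrderedAddMonoid α] {n : ℕ} {u v s t : Fin n → α} (hs : Antitone s) (ht : Antitone t)
    (σ τ τ' : Equiv.Perm (Fin n)) (hsτ : s = u ∘ τ) (htτ : t = v ∘ τ') {c : α}
    (huv : ∀ j, |u j - v (σ j)| ≤ c) (k : Fin n) :
    |s k - t k| ≤ c := by
  have hst : s k - c ≤ t k :=
    le_of_antitone_rearrangements (u := fun j => u j - c) (s := fun i => s i - c)
      (fun _ _ h => sub_le_sub_right (hs h) c) ht σ τ τ' (by rw [hsτ]; rfl) htτ
      (fun j => sub_le_comm.mp (abs_sub_le_iff.mp (huv j)).1) k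
  have hts : t k - c ≤ s k :=
    le_of_antitone_rearrangements (u := fun j => v j - c) (s := fun i => t i - c)
      (fun _ _ h => sub_le_sub_right (ht h) c) hs σ.symm τ' τ (by rw [htτ]; rfl) hsτ
      (fun j => by
        simpa using sub_le_comm.mp (abs_sub_le_iff.mp (huv (σ.symm j))).2) k
  exact abs_sub_le_iff.mpr ⟨sub_le_comm.mp hst, sub_le_comm.mp hts⟩

theorem abs_barLength_sub_barLength_le (p q : ℝ × ℝ) :
    |max 0 (p.2 - p.1) - max 0 (q.2 - q.1)| ≤ |p.1 - q.1| + |p.2 - q.2| :=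
  calc |max 0 (p.2 - p.1) - max 0 (q.2 - q.1)| ≤ |(p.2 - p.1) - (q.2 - q.1)| := by
        simpa only [max_comm] using abs_max_sub_max_le_abs (p.2 - p.1) (q.2 - q.1) 0
    _ = |(p.2 - q.2) - (p.1 - q.1)| := by ring_nf
    _ ≤ |p.1 - q.1| + |p.2 - q.2| := by
        rw [add_comm]; exact abs_sub _ _

theorem stmt_10_general (n : ℕ) (ε : ℝ) (X Y : Fin n → ℝ × ℝ)
    (σ : Equiv.Perm (Fin n))
    (hσ : ∀ k, |(X k).1 - (Y (σ k)).1| ≤ ε ∧ |(X k).2 - (Y (σ k)).2| ≤ ε)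
    (s t : Fin n → ℝ) (hs : Antitone s) (ht : Antitone t)
    (τ τ' : Equiv.Perm (Fin n))
    (hsτ : s = (fun k => max 0 ((X k).2 - (X k).1)) ∘ τ)
    (htτ : t = (fun k => max 0 ((Y k).2 - (Y k).1)) ∘ τ') :
    ∀ k, |s k - t k| ≤ 2 * ε :=
  abs_sub_le_of_antitone_rearrangements hs ht σ τ τ' hsτ htτ fun j => by
    linarith [abs_barLength_sub_barLength_le (X j) (Y (σ j)), hσ j]

/-- Top-K stability in matching form: if a permutation matches two families of
bars with endpoints moving by at most `ε`, then the sorted non-increasing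
length vectors differ by at most `2ε` in every coordinate. -/
theorem stmt_10 (n : ℕ) (ε : ℝ) (hε : 0 ≤ ε) (X Y : Fin n → ℝ × ℝ)
    (σ : Equiv.Perm (Fin n))
    (hσ : ∀ k, |(X k).1 - (Y (σ k)).1| ≤ ε ∧ |(X k).2 - (Y (σ k)).2| ≤ ε)
    (s t : Fin n → ℝ) (hs : Antitone s) (ht : Antitone t)
    (τ τ' : Equiv.Perm (Fin n))
    (hsτ : s = (fun k => max 0 ((X k).2 - (X k).1)) ∘ τ)
    (htτ : t = (fun k => max 0 ((Y k).2 - (Y k).1)) ∘ τ') :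
    ∀ k, |s k - t k| ≤ 2 * ε :=
  stmt_10_general n ε X Y σ hσ s t hs ht τ τ' hsτ htτ
end
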